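/- Let (R, m) be a noetherian local ring and M an R-module such that every element of M is annihilated by a power of m. Then M carries a natural structure of a module over the m-adic completion R̂ of R, and if M is injective as an R̂-module then M is injective as an R-module. -/

import Mathlib

/-!
An element `x` killed by `m ^ n` is acted on by `R ⧸ m ^ n`, so `R̂` acts on it through
`R̂ → R ⧸ m ^ n`; a lift of the image of `r` at a larger level is also a lift at level `n`, so the
action does not depend on `n`.

Injectivity descends along any flat algebra `R → S`: an `R`-linear extension problem along an
injection `f : X → Y` base-changes to one along the injection `S ⊗ X → S ⊗ Y`, which `M` solves
over `S`, and restricting the solution along `y ↦ 1 ⊗ y` solves the original problem. For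
noetherian `R` the completion `R̂` is flat.
-/

universe u v

namespace AdicCompletion

variable {R : Type*} [CommRing R] (I : Ideal R)

theorem factor_evalₐ_of_le {m n : ℕ} (h : m ≤ n) (r : AdicCompletion I R) :
    Ideal.Quotient.factor (Ideal.pow_le_pow_right h) (evalₐ I n r) = evalₐ I m r := by
  obtain ⟨r, rfl⟩ := mk_surjective I R r
  simpa only [evalₐ_mk, Ideal.Quotient.factor_mk] using Ideal.mk_eq_mk I h r

variable {I} {M : Type*} [AddCommGroup M] [Module R M]

theorem smul_eq_smul_of_evalₐ_eq {r : AdicCompletion I R} {x : M} {m n : ℕ}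
    (hm : ∀ c ∈ I ^ m, c • x = 0) (hn : ∀ c ∈ I ^ n, c • x = 0) {a b : R}
    (ha : Ideal.Quotient.mk _ a = evalₐ I m r) (hb : Ideal.Quotient.mk _ b = evalₐ I n r) :
    a • x = b • x := by
  wlog hmn : m ≤ n generalizing m n a b
  · exact (this hn hm hb ha (le_of_not_ge hmn)).symm
  have hab : Ideal.Quotient.mk (I ^ m) a = Ideal.Quotient.mk (I ^ m) b := by
    rw [ha, ← factor_evalₐ_of_le I hmn, ← hb, Ideal.Quotient.factor_mk]
  rw [← sub_eq_zero, ← sub_smul]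
  exact hm _ (Ideal.Quotient.eq.mp hab)

variable (htor : ∀ x : M, ∃ n : ℕ, ∀ a ∈ I ^ n, a • x = 0)

noncomputable def smulOfPowTorsion (r : AdicCompletion I R) (x : M) : M :=
  (Ideal.Quotient.mk_surjective (evalₐ I (htor x).choose r)).choose • x

theorem smulOfPowTorsion_eq {r : AdicCompletion I R} {x : M} {n : ℕ}
    (hn : ∀ c ∈ I ^ n, c • x = 0) {a : R} (ha : Ideal.Quotient.mk _ a = evalₐ I n r) :
    smulOfPowTorsion htor r x = a • x :=
  smul_eq_smul_of_evalₐ_eq (htor x).choose_spec hn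
    (Ideal.Quotient.mk_surjective (evalₐ I (htor x).choose r)).choose_spec ha

noncomputable abbrev moduleOfPowTorsion : Module (AdicCompletion I R) M :=
  letI : SMul (AdicCompletion I R) M := ⟨smulOfPowTorsion htor⟩
  Module.ofMinimalAxioms
    (fun r x y ↦ by
      obtain ⟨m, hm⟩ := htor x
      obtain ⟨n, hn⟩ := htor y
      obtain ⟨a, ha⟩ := Ideal.Quotient.mk_surjective (evalₐ I (max m n) r)
      have hx : ∀ c ∈ I ^ max m n, c • x = 0 :=
        fun c hc ↦ hm c (Ideal.pow_le_pow_right (le_max_left m n) hc)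
      have hy : ∀ c ∈ I ^ max m n, c • y = 0 :=
        fun c hc ↦ hn c (Ideal.pow_le_pow_right (le_max_right m n) hc)
      have hxy : ∀ c ∈ I ^ max m n, c • (x + y) = 0 :=
        fun c hc ↦ by rw [smul_add, hx c hc, hy c hc, add_zero]
      change smulOfPowTorsion htor r (x + y) =
        smulOfPowTorsion htor r x + smulOfPowTorsion htor r y
      rw [smulOfPowTorsion_eq htor hxy ha, smulOfPowTorsion_eq htor hx ha,
        smulOfPowTorsion_eq htor hy ha, smul_add])
    (fun r s x ↦ by
      obtain ⟨n, hn⟩ := htor x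
      obtain ⟨a, ha⟩ := Ideal.Quotient.mk_surjective (evalₐ I n r)
      obtain ⟨b, hb⟩ := Ideal.Quotient.mk_surjective (evalₐ I n s)
      change smulOfPowTorsion htor (r + s) x =
        smulOfPowTorsion htor r x + smulOfPowTorsion htor s x
      rw [smulOfPowTorsion_eq htor hn (a := a + b) (by rw [map_add, map_add, ha, hb]),
        smulOfPowTorsion_eq htor hn ha, smulOfPowTorsion_eq htor hn hb, add_smul])
    (fun r s x ↦ by
      obtain ⟨n, hn⟩ := htor x
      obtain ⟨a, ha⟩ := Ideal.Quotient.mk_surjective (evalₐ I n r)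
      obtain ⟨b, hb⟩ := Ideal.Quotient.mk_surjective (evalₐ I n s)
      have hbx : ∀ c ∈ I ^ n, c • b • x = 0 := fun c hc ↦ by rw [smul_comm, hn c hc, smul_zero]
      change smulOfPowTorsion htor (r * s) x = smulOfPowTorsion htor r (smulOfPowTorsion htor s x)
      rw [smulOfPowTorsion_eq htor hn (a := a * b) (by rw [map_mul, map_mul, ha, hb]),
        smulOfPowTorsion_eq htor hn hb, smulOfPowTorsion_eq htor hbx ha, mul_smul])
    (fun x ↦ by
      obtain ⟨n, hn⟩ := htor x
      exact (smulOfPowTorsion_eq htor hn (a := 1) (by rw [map_one, map_one])).trans (one_smul R x))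

theorem isScalarTower_moduleOfPowTorsion :
    letI := moduleOfPowTorsion htor
    IsScalarTower R (AdicCompletion I R) M := by
  let := moduleOfPowTorsion htor
  refine IsScalarTower.of_algebraMap_smul fun r x ↦ ?_
  obtain ⟨n, hn⟩ := htor x
  exact smulOfPowTorsion_eq htor hn (by rw [← evalₐ_of]; rfl)

end AdicCompletion

open TensorProduct in
theorem Module.Injective.of_flat_algebra {R : Type*} {S : Type u} {M : Type v} [CommRing R]
    [CommRing S] [Algebra R S] [Module.Flat R S] [Small.{v} S] [AddCommGroup M] [Module R M]
    [Module S M] [IsScalarTower R S M] [Module.Injective S M] : Module.Injective R M where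
  out X Y _ _ _ _ f hf g := by
    have hfS : Function.Injective (f.baseChange S) := by
      rw [LinearMap.baseChange_eq_ltensor]
      exact Module.Flat.lTensor_preserves_injective_linearMap f hf
    obtain ⟨h, hh⟩ := Module.Injective.extension_property S M _ _ _ hfS (g.liftBaseChange S)
    refine ⟨h.restrictScalars R ∘ₗ TensorProduct.mk R S Y 1, fun x ↦ ?_⟩
    simpa using LinearMap.congr_fun hh (1 ⊗ₜ x)

/-- Let `(R, m)` be a noetherian local ring and `M` an `R`-module every element of which is
annihilated by a power of `m`. Then `M` carries a natural module structure over the `m`-adic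
completion `R̂` (compatible with the `R`-structure via `R → R̂`), and if `M` is injective over
`R̂` then it is injective over `R`. -/
theorem stmt_16 (R : Type) [CommRing R] [IsNoetherianRing R] [IsLocalRing R]
    (M : Type) [AddCommGroup M] [Module R M]
    (htor : ∀ x : M, ∃ n : ℕ, ∀ a ∈ (IsLocalRing.maximalIdeal R) ^ n, a • x = 0) :
    ∃ inst : Module (AdicCompletion (IsLocalRing.maximalIdeal R) R) M,
      (∀ (r : R) (x : M),
        letI := inst
        (algebraMap R (AdicCompletion (IsLocalRing.maximalIdeal R) R) r) • x = r • x) ∧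
      ((letI := inst;
        Module.Injective (AdicCompletion (IsLocalRing.maximalIdeal R) R) M) →
        Module.Injective R M) := by
  let := AdicCompletion.moduleOfPowTorsion htor
  have := AdicCompletion.isScalarTower_moduleOfPowTorsion htor
  exact ⟨_, algebraMap_smul _,
    fun _ ↦ .of_flat_algebra (S := AdicCompletion (IsLocalRing.maximalIdeal R) R)⟩
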